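/- (Functional Representation Lemma, cardinality-bounded form) For any finite random variables W and T with T taking values in 𝒯, there exists a random variable Z independent of W, taking values in an alphabet of size at most |𝒲|(|𝒯| − 1) + 1, and a deterministic function g such that T = g(W, Z) almost surely and the joint distribution of (W, T) is preserved. -/

import Mathlib

open scoped BigOperators Classical
open Real Finset

noncomputable section

/-- A probability mass function on a finite sample space. -/
structure FinProb (Ω : Type*) [Fintype Ω] where
  p : Ω → ℝ
  nonneg : ∀ ω, 0 ≤ p ω
  sum_one : ∑ ω, p ω = 1

namespace FinProb

variable {Ω : Type*} [Fintype Ω]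

/-- Probability of an event. -/
def pr (μ : FinProb Ω) (E : Ω → Prop) : ℝ := ∑ ω, if E ω then μ.p ω else 0

/-- Distribution of a random variable. -/
def dist (μ : FinProb Ω) {α : Type*} [Fintype α] (X : Ω → α) (x : α) : ℝ :=
  μ.pr (fun ω => X ω = x)

/-- Shannon entropy (in bits) of a finite random variable. -/
def H (μ : FinProb Ω) {α : Type*} [Fintype α] (X : Ω → α) : ℝ :=
  ∑ x, -(μ.dist X x) * Real.logb 2 (μ.dist X x)

/-- Joint entropy H(X,Y). -/
def H2 (μ : FinProb Ω) {α β : Type*} [Fintype α] [Fintype β] (X : Ω → α) (Y : Ω → β) : ℝ :=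
  μ.H (fun ω => (X ω, Y ω))

/-- Conditional entropy H(X|Y). -/
def condH (μ : FinProb Ω) {α β : Type*} [Fintype α] [Fintype β] (X : Ω → α) (Y : Ω → β) : ℝ :=
  μ.H2 X Y - μ.H Y

/-- Mutual information I(X;Y) in bits. -/
def mi (μ : FinProb Ω) {α β : Type*} [Fintype α] [Fintype β] (X : Ω → α) (Y : Ω → β) : ℝ :=
  μ.H X + μ.H Y - μ.H2 X Y

/-- Conditional mutual information I(X;Y|Z) in bits. -/
def cmi (μ : FinProb Ω) {α β γ : Type*} [Fintype α] [Fintype β] [Fintype γ]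
    (X : Ω → α) (Y : Ω → β) (Z : Ω → γ) : ℝ :=
  μ.H2 X Z + μ.H2 Y Z - μ.H (fun ω => (X ω, Y ω, Z ω)) - μ.H Z

/-- Conditional probability of event `A` given event `E`. -/
def cpr (μ : FinProb Ω) (A E : Ω → Prop) : ℝ :=
  μ.pr (fun ω => A ω ∧ E ω) / μ.pr E

/-- Conditional distribution of `X` given the event `E`. -/
def distCond (μ : FinProb Ω) {α : Type*} [Fintype α] (X : Ω → α) (E : Ω → Prop) (x : α) : ℝ :=
  μ.cpr (fun ω => X ω = x) E

/-- Entropy of `X` under the conditional distribution given the event `E`. -/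
def entCond (μ : FinProb Ω) {α : Type*} [Fintype α] (X : Ω → α) (E : Ω → Prop) : ℝ :=
  ∑ x, -(μ.distCond X E x) * Real.logb 2 (μ.distCond X E x)

/-- Conditional entropy H(X | T, E): entropy of `X` given the random variable `T`,
all within the event `E` (averaged over `T` with conditional weights). -/
def condHOn (μ : FinProb Ω) {α β : Type*} [Fintype α] [Fintype β]
    (X : Ω → α) (T : Ω → β) (E : Ω → Prop) : ℝ :=
  ∑ t, μ.cpr (fun ω => T ω = t) E * μ.entCond X (fun ω => T ω = t ∧ E ω)

end FinProb

/-!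
Given `W = w`, `T` is the image of a uniform `U ∈ [0, 1)` under the quantile function of its
conditional law, whose cdf `F_w` jumps at most `|𝒯| - 1` times inside `(0, 1)`. Merging the
breakpoints of all the `F_w` gives one path `0 = s₀ ≤ ⋯ ≤ s_N = 1` with
`N = |𝒲|(|𝒯| - 1) + 1`; each cell `[s_k, s_{k+1})` lies in a single interval of every `F_w`.
So `Z` = the cell of `U`, drawn independently of `W` with law `s_{k+1} - s_k`, and
`g(w, k)` = the `F_w`-quantile of `s_k` represent `T`.
-/

section LinearOrder

variable {α : Type*} [LinearOrder α]

lemma exists_le_lt_succ {F : ℕ → α} {u : α} {m : ℕ} (h0 : F 0 ≤ u) (hm : u < F m) :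
    ∃ j < m, F j ≤ u ∧ u < F (j + 1) := by
  induction m with
  | zero => exact absurd (h0.trans_lt hm) (lt_irrefl _)
  | succ m ih =>
    by_cases h : u < F m
    · obtain ⟨j, hj, hju⟩ := ih h
      exact ⟨j, by omega, hju⟩
    · exact ⟨m, m.lt_succ_self, not_lt.mp h, hm⟩

lemma Monotone.eq_of_le_lt_succ {F : ℕ → α} (hF : Monotone F) {u : α} {i j : ℕ}
    (hi : F i ≤ u ∧ u < F (i + 1)) (hj : F j ≤ u ∧ u < F (j + 1)) : i = j := by
  by_contra hne
  rcases lt_or_gt_of_ne hne with h | h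
  · exact (hF h).trans hj.1 |>.not_gt hi.2
  · exact (hF h).trans hi.1 |>.not_gt hj.2

lemma Finset.exists_monotone_enum (S : Finset α) {a b : α} {N : ℕ}
    (hS : ∀ x ∈ S, a ≤ x ∧ x ≤ b) (ha : a ∈ S) (hb : b ∈ S) (hcard : S.card ≤ N + 1) :
    ∃ s : ℕ → α, Monotone s ∧ s 0 = a ∧ s N = b ∧ ∀ x ∈ S, ∃ k ≤ N, s k = x := by
  set f := S.orderEmbOfFin rfl
  have hrange : ∀ x ∈ S, ∃ k : Fin S.card, f k = x := fun x hx => by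
    rw [← Finset.mem_coe, ← S.range_orderEmbOfFin rfl] at hx
    exact hx
  let s : ℕ → α := fun k => if h : k < S.card then f ⟨k, h⟩ else b
  have hs_lt : ∀ k (h : k < S.card), s k = f ⟨k, h⟩ := fun k h => dif_pos h
  have hmono : Monotone s := fun i j hij => by
    simp only [s]
    split_ifs with hi hj hj
    · exact f.monotone (Fin.mk_le_mk.mpr hij)
    · exact (hS _ (S.orderEmbOfFin_mem rfl _)).2
    · omega
    · exact le_rfl
  refine ⟨s, hmono, ?_, ?_, fun x hx => ?_⟩
  · have hpos : 0 < S.card := Finset.card_pos.mpr ⟨a, ha⟩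
    obtain ⟨k, rfl⟩ := hrange a ha
    exact le_antisymm ((hmono (Nat.zero_le k)).trans_eq (hs_lt k k.isLt))
      ((hS _ (S.orderEmbOfFin_mem rfl ⟨0, hpos⟩)).1.trans_eq (hs_lt 0 hpos).symm)
  · by_cases hN : N < S.card
    · obtain ⟨k, rfl⟩ := hrange b hb
      exact le_antisymm ((hs_lt N hN).trans_le (hS _ (S.orderEmbOfFin_mem rfl _)).2)
        ((hs_lt k k.isLt).symm.trans_le (hmono (by omega)))
    · exact dif_neg hN
  · obtain ⟨k, rfl⟩ := hrange x hx
    exact ⟨k, by omega, hs_lt k k.isLt⟩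

end LinearOrder

section Telescoping

variable {α : Type*} [LinearOrder α] [AddCommGroup α] {s : ℕ → α}

lemma Monotone.ite_lt_sub_eq (hs : Monotone s) (c k : ℕ) :
    (if s k < s c then s (k + 1) - s k else 0) = if k < c then s (k + 1) - s k else 0 := by
  by_cases hkc : k < c
  · by_cases h : s k < s c
    · simp [h, hkc]
    · have : s (k + 1) = s k := le_antisymm ((hs hkc).trans (not_lt.mp h)) (hs k.le_succ)
      simp [h, hkc, this]
  · have : ¬ s k < s c := not_lt.mpr (hs (not_lt.mp hkc))
    simp [this, hkc]

lemma Monotone.sum_range_ite_lt (hs : Monotone s) {c N : ℕ} (hc : c ≤ N) :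
    ∑ k ∈ range N, (if s k < s c then s (k + 1) - s k else 0) = s c - s 0 := by
  simp_rw [hs.ite_lt_sub_eq c, ← sum_filter, ← sum_range_sub]
  congr 1
  ext k
  simp only [mem_filter, mem_range]
  omega

lemma Monotone.sum_range_ite_le_lt (hs : Monotone s) {a b N : ℕ} (ha : a ≤ N) (hb : b ≤ N)
    (hab : s a ≤ s b) :
    ∑ k ∈ range N, (if s a ≤ s k ∧ s k < s b then s (k + 1) - s k else 0) = s b - s a := by
  have split : ∀ k, (if s a ≤ s k ∧ s k < s b then s (k + 1) - s k else 0)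
      = (if s k < s b then s (k + 1) - s k else 0) - if s k < s a then s (k + 1) - s k else 0 := by
    intro k
    by_cases h : s k < s a
    · simp [h, h.trans_le hab, not_le.mpr h]
    · simp [h, not_lt.mp h]
  rw [sum_congr rfl fun k _ => split k, sum_sub_distrib, hs.sum_range_ite_lt hb,
    hs.sum_range_ite_lt ha, sub_sub_sub_cancel_right]

end Telescoping

lemma exists_monotone_merge {ι α : Type*} [Fintype ι] [LinearOrder α] (F : ι → ℕ → α)
    {a b : α} {m : ℕ} (hab : a ≤ b) (hF : ∀ i j, a ≤ F i j ∧ F i j ≤ b) (h0 : ∀ i, F i 0 = a)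
    (hm : ∀ i, F i m = b) :
    ∃ s : ℕ → α, Monotone s ∧ s 0 = a ∧ s (Fintype.card ι * (m - 1) + 1) = b ∧
      ∀ i, ∀ j ≤ m, ∃ k ≤ Fintype.card ι * (m - 1) + 1, s k = F i j := by
  let S : Finset α := insert a (insert b (univ.image fun p : ι × Fin (m - 1) => F p.1 (p.2 + 1)))
  have hcard : S.card ≤ Fintype.card ι * (m - 1) + 1 + 1 := by
    refine (card_insert_le _ _).trans (Nat.add_le_add_right ((card_insert_le _ _).trans ?_) 1)
    refine Nat.add_le_add_right (card_image_le.trans ?_) 1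
    simp
  have hmem : ∀ i, ∀ j ≤ m, F i j ∈ S := by
    intro i j hj
    rcases Nat.eq_zero_or_pos j with rfl | hj0
    · simp [S, h0]
    rcases hj.lt_or_eq with hjm | rfl
    · refine mem_insert_of_mem (mem_insert_of_mem (mem_image.mpr ?_))
      exact ⟨(i, ⟨j - 1, by omega⟩), mem_univ _, by simp only [Nat.sub_add_cancel hj0]⟩
    · simp [S, hm]
  obtain ⟨s, hs, hs0, hsN, hsS⟩ := S.exists_monotone_enum (fun x hx => by
    simp only [S, mem_insert, mem_image] at hx
    rcases hx with rfl | rfl | ⟨p, -, rfl⟩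
    exacts [⟨le_rfl, hab⟩, ⟨hab, le_rfl⟩, hF _ _])
    (mem_insert_self _ _) (mem_insert_of_mem (mem_insert_self _ _)) hcard
  exact ⟨s, hs, hs0, hsN, fun i j hj => hsS _ (hmem i j hj)⟩

namespace FinProb

section Basics

variable {Ω α β : Type*} [Fintype Ω] [Fintype α] [Fintype β]

lemma pr_congr (μ : FinProb Ω) {E E' : Ω → Prop} (h : ∀ ω, E ω ↔ E' ω) : μ.pr E = μ.pr E' :=
  congrArg μ.pr (funext fun ω => propext (h ω))

lemma pr_nonneg (μ : FinProb Ω) (E : Ω → Prop) : 0 ≤ μ.pr E :=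
  sum_nonneg fun ω _ => by split_ifs <;> simp [μ.nonneg ω]

lemma pr_mono (μ : FinProb Ω) {E E' : Ω → Prop} (h : ∀ ω, E ω → E' ω) : μ.pr E ≤ μ.pr E' :=
  sum_le_sum fun ω _ => by
    by_cases hE : E ω
    · simp [hE, h ω hE]
    · by_cases hE' : E' ω <;> simp [hE, hE', μ.nonneg ω]

lemma pr_true (μ : FinProb Ω) : μ.pr (fun _ => True) = 1 := by
  simp [pr, μ.sum_one]

lemma pr_le_one (μ : FinProb Ω) (E : Ω → Prop) : μ.pr E ≤ 1 :=
  (μ.pr_mono fun _ _ => trivial).trans_eq μ.pr_true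

lemma pr_eq_p (μ : FinProb Ω) (a : Ω) : μ.pr (· = a) = μ.p a := by
  simp [pr]

lemma nonempty (μ : FinProb Ω) : Nonempty Ω := by
  by_contra h
  simpa [not_nonempty_iff.mp h] using μ.sum_one

def map (μ : FinProb Ω) (X : Ω → α) : FinProb α where
  p := μ.dist X
  nonneg _ := μ.pr_nonneg _
  sum_one := by
    simp only [dist, pr]
    rw [sum_comm]
    simpa using μ.sum_one

/-- Conditioning on `E`; a null event leaves `μ` unchanged. -/
def cond (μ : FinProb Ω) (E : Ω → Prop) : FinProb Ω where
  p ω := if μ.pr E = 0 then μ.p ω else if E ω then μ.p ω / μ.pr E else 0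
  nonneg ω := by
    have := μ.nonneg ω
    have := μ.pr_nonneg E
    split_ifs <;> positivity
  sum_one := by
    by_cases h : μ.pr E = 0
    · simpa [h] using μ.sum_one
    · simp only [h, if_false]
      rw [← div_self h, pr, sum_div]
      exact sum_congr rfl fun ω _ => by split_ifs <;> simp

lemma cond_pr_mul_pr (μ : FinProb Ω) (A E : Ω → Prop) :
    (μ.cond E).pr A * μ.pr E = μ.pr (fun ω => A ω ∧ E ω) := by
  by_cases h : μ.pr E = 0
  · rw [h, mul_zero]
    exact (le_antisymm ((μ.pr_mono fun _ hω => hω.2).trans_eq h) (μ.pr_nonneg _)).symm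
  · rw [← eq_div_iff h, pr, pr, sum_div]
    exact sum_congr rfl fun ω _ => by simp only [cond, h, if_false]; split_ifs <;> simp_all

def prod (μ : FinProb α) (ν : FinProb β) : FinProb (α × β) where
  p x := μ.p x.1 * ν.p x.2
  nonneg x := mul_nonneg (μ.nonneg _) (ν.nonneg _)
  sum_one := by
    rw [Fintype.sum_prod_type, ← Fintype.sum_mul_sum, μ.sum_one, ν.sum_one, one_mul]

lemma prod_pr_and (μ : FinProb α) (ν : FinProb β) (A : α → Prop) (B : β → Prop) :
    (μ.prod ν).pr (fun x => A x.1 ∧ B x.2) = μ.pr A * ν.pr B := by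
  simp only [pr, prod, Fintype.sum_prod_type, Fintype.sum_mul_sum, ite_zero_mul_ite_zero]

lemma prod_pr_fst_eq_and (μ : FinProb α) (ν : FinProb β) (a : α) (B : α → β → Prop) :
    (μ.prod ν).pr (fun x => x.1 = a ∧ B x.1 x.2) = μ.p a * ν.pr (B a) := by
  rw [← pr_eq_p, ← prod_pr_and]
  exact pr_congr _ fun x => ⟨fun ⟨h, hB⟩ => ⟨h, h ▸ hB⟩, fun ⟨h, hB⟩ => ⟨h, h ▸ hB⟩⟩

lemma prod_dist_fst (μ : FinProb α) (ν : FinProb β) (a : α) :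
    (μ.prod ν).dist Prod.fst a = μ.p a := by
  simpa [dist, pr_true] using μ.prod_pr_fst_eq_and ν a fun _ _ => True

lemma prod_dist_snd (μ : FinProb α) (ν : FinProb β) (b : β) :
    (μ.prod ν).dist Prod.snd b = ν.p b := by
  simpa [dist, pr_true, pr_eq_p] using μ.prod_pr_and ν (fun _ => True) (· = b)

end Basics


section Quantile

variable {α : Type*} [Fintype α] {m : ℕ}

def cdf (q : FinProb α) (e : α ≃ Fin m) (j : ℕ) : ℝ := q.pr fun t => (e t : ℕ) < j

lemma cdf_mono (q : FinProb α) (e : α ≃ Fin m) : Monotone (q.cdf e) :=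
  fun _ _ hij => q.pr_mono fun _ ht => ht.trans_le hij

lemma cdf_zero (q : FinProb α) (e : α ≃ Fin m) : q.cdf e 0 = 0 := by
  simp [cdf, pr]

lemma cdf_card (q : FinProb α) (e : α ≃ Fin m) : q.cdf e m = 1 :=
  (q.pr_congr fun t => iff_true_intro (e t).isLt).trans q.pr_true

lemma cdf_succ_sub (q : FinProb α) (e : α ≃ Fin m) (t : α) :
    q.cdf e (e t + 1) - q.cdf e (e t) = q.p t := by
  rw [cdf, cdf, pr, pr, ← sum_sub_distrib, ← q.pr_eq_p, pr]
  refine sum_congr rfl fun t' _ => ?_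
  by_cases h : t' = t
  · simp [h]
  · have : (e t' : ℕ) ≠ e t := fun h' => h (e.injective (Fin.ext h'))
    have : (e t' : ℕ) < e t + 1 ↔ (e t' : ℕ) < e t := by omega
    simp [h, this]

/-- Unspecified when `u ∉ [0, 1)`. -/
def quantile (q : FinProb α) (e : α ≃ Fin m) (u : ℝ) : α :=
  haveI := q.nonempty
  Classical.epsilon fun t => q.cdf e (e t) ≤ u ∧ u < q.cdf e (e t + 1)

lemma quantile_eq_iff (q : FinProb α) (e : α ≃ Fin m) {u : ℝ} (hu0 : 0 ≤ u) (hu1 : u < 1)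
    (t : α) : q.quantile e u = t ↔ q.cdf e (e t) ≤ u ∧ u < q.cdf e (e t + 1) := by
  have hex : ∃ t, q.cdf e (e t) ≤ u ∧ u < q.cdf e (e t + 1) := by
    obtain ⟨j, hj, hju⟩ := exists_le_lt_succ (F := q.cdf e) (by rwa [cdf_zero])
      (by rwa [cdf_card] : u < q.cdf e m)
    exact ⟨e.symm ⟨j, hj⟩, by simpa using hju⟩
  refine ⟨fun h => h ▸ Classical.epsilon_spec hex, fun ht => e.injective (Fin.ext ?_)⟩
  exact (q.cdf_mono e).eq_of_le_lt_succ (Classical.epsilon_spec hex) ht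

def increments {N : ℕ} (s : ℕ → ℝ) (hs : Monotone s) (h0 : s 0 = 0) (hN : s N = 1) :
    FinProb (Fin N) where
  p k := s (k + 1) - s k
  nonneg k := sub_nonneg.mpr (hs k.val.le_succ)
  sum_one := by
    rw [Fin.sum_univ_eq_sum_range (fun k => s (k + 1) - s k), sum_range_sub, hN, h0, sub_zero]

/-- The increments inside each cdf-interval telescope to its length. -/
lemma increments_pr_quantile_eq {N : ℕ} (q : FinProb α) (e : α ≃ Fin m) {s : ℕ → ℝ}
    (hs : Monotone s) (h0 : s 0 = 0) (hN : s N = 1)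
    (hcdf : ∀ j ≤ m, ∃ k ≤ N, s k = q.cdf e j) (t : α) :
    (increments s hs h0 hN).pr (fun k => q.quantile e (s k) = t) = q.p t := by
  obtain ⟨a, ha, hsa⟩ := hcdf (e t) (e t).isLt.le
  obtain ⟨b, hb, hsb⟩ := hcdf (e t + 1) (e t).isLt
  have hterm : ∀ k ∈ range N, (if q.quantile e (s k) = t then s (k + 1) - s k else 0)
      = if s a ≤ s k ∧ s k < s b then s (k + 1) - s k else 0 := by
    intro k hk
    have hkN : k + 1 ≤ N := mem_range.mp hk
    by_cases hk1 : s k < 1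
    · exact if_congr (by rw [q.quantile_eq_iff e (h0 ▸ hs (Nat.zero_le k)) hk1, hsa, hsb]) rfl rfl
    · have hsk : s k = 1 := le_antisymm (hN ▸ hs (by omega)) (not_lt.mp hk1)
      have hsk1 : s (k + 1) = 1 := le_antisymm (hN ▸ hs hkN) (hsk ▸ hs k.le_succ)
      simp [hsk, hsk1]
  change ∑ k : Fin N, (if q.quantile e (s k) = t then s (k + 1) - s k else 0) = q.p t
  have hab : s a ≤ s b := by rw [hsa, hsb]; exact q.cdf_mono e (Nat.le_succ _)
  rw [Fin.sum_univ_eq_sum_range (fun k => if q.quantile e (s k) = t then s (k + 1) - s k else 0),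
    sum_congr rfl hterm, hs.sum_range_ite_le_lt ha hb hab, hsa, hsb, cdf_succ_sub]

end Quantile

theorem exists_common_representation {ι α : Type*} [Fintype ι] [Fintype α]
    (q : ι → FinProb α) :
    ∃ (r : FinProb (Fin (Fintype.card ι * (Fintype.card α - 1) + 1)))
      (g : ι → Fin (Fintype.card ι * (Fintype.card α - 1) + 1) → α),
      ∀ i t, r.pr (fun z => g i z = t) = (q i).p t := by
  let e := Fintype.equivFin α
  obtain ⟨s, hs, h0, hN, hcdf⟩ := exists_monotone_merge (fun i => (q i).cdf e) zero_le_one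
    (fun i j => ⟨(q i).pr_nonneg _, (q i).pr_le_one _⟩) (fun i => (q i).cdf_zero e)
    (fun i => (q i).cdf_card e)
  exact ⟨increments s hs h0 hN, fun i z => (q i).quantile e (s z),
    fun i => (q i).increments_pr_quantile_eq e hs h0 hN (hcdf i)⟩

end FinProb

/-- Functional Representation Lemma, cardinality-bounded form:
for finite random variables `W, T` there is a probability space carrying `(W', Z)` with
`Z` independent of `W'`, `Z` taking at most `|𝒲|(|𝒯|−1)+1` values, and a deterministic
`g` such that `(W', g(W',Z))` has the same joint law as `(W, T)`. -/
theorem stmt12 {Ω 𝒲 𝒯 : Type} [Fintype Ω] [Fintype 𝒲] [Fintype 𝒯]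
    (μ : FinProb Ω) (W : Ω → 𝒲) (T : Ω → 𝒯) :
    ∃ (μ' : FinProb (𝒲 × Fin (Fintype.card 𝒲 * (Fintype.card 𝒯 - 1) + 1)))
      (g : 𝒲 → Fin (Fintype.card 𝒲 * (Fintype.card 𝒯 - 1) + 1) → 𝒯),
      (∀ w z, μ'.pr (fun ω => ω.1 = w ∧ ω.2 = z)
          = μ'.dist Prod.fst w * μ'.dist Prod.snd z) ∧
      (∀ w t, μ'.pr (fun ω => ω.1 = w ∧ g ω.1 ω.2 = t)
          = μ.pr (fun ω => W ω = w ∧ T ω = t)) := by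
  obtain ⟨r, g, hg⟩ :=
    FinProb.exists_common_representation fun w => (μ.cond (W · = w)).map T
  refine ⟨(μ.map W).prod r, g, fun w z => ?_, fun w t => ?_⟩
  · rw [FinProb.prod_dist_fst, FinProb.prod_dist_snd, ← FinProb.pr_eq_p r]
    exact FinProb.prod_pr_fst_eq_and _ _ w fun _ z' => z' = z
  · calc ((μ.map W).prod r).pr (fun ω => ω.1 = w ∧ g ω.1 ω.2 = t)
        = (μ.cond (W · = w)).pr (T · = t) * μ.pr (W · = w) := by
          rw [FinProb.prod_pr_fst_eq_and _ _ w fun w' z => g w' z = t, hg, mul_comm]; rfl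
      _ = μ.pr (fun ω => W ω = w ∧ T ω = t) :=
          (μ.cond_pr_mul_pr _ _).trans (μ.pr_congr fun _ => and_comm)
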